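/- arXiv:1601.06529 — 6 statements merged into one kernel-verified Lean document; each statement's English description precedes it below -/
import Mathlib

section
/- Let f be strictly convex and differentiable on (0,∞), let P, Q be mutually orthogonal rank-one projections on a finite-dimensional complex Hilbert space, let 0 < λ < μ < 1 with λ + μ = 1, and set S = λP + μQ. Then for any rank-one projection R with range contained in range(P) + range(Q), one has H_f(R, S) = −f'(λ)·tr(RP) − f'(μ)·tr(RQ) + C, where C = λf'(λ) − f(λ) + μf'(μ) − f(μ), assuming f(0) = f(1) = 0. -/
open Matrix
open scoped ComplexOrder

/-- Standard operator function: apply `f : ℝ → ℝ` to a Hermitian matrix via its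
spectral decomposition (junk value `0` for non-Hermitian input). -/
noncomputable def matFun {n : ℕ} (f : ℝ → ℝ) (A : Matrix (Fin n) (Fin n) ℂ) :
    Matrix (Fin n) (Fin n) ℂ :=
  if hA : A.IsHermitian then
    (hA.eigenvectorUnitary : Matrix (Fin n) (Fin n) ℂ) *
      Matrix.diagonal (fun i => (f (hA.eigenvalues i) : ℂ)) *
      (star (hA.eigenvectorUnitary : Matrix (Fin n) (Fin n) ℂ))
  else 0

/-- Bregman `f`-divergence `H_f(A,B) = tr (f(A) - f(B) - f'(B)(A-B))`. -/
noncomputable def bregman {n : ℕ} (f : ℝ → ℝ) (A B : Matrix (Fin n) (Fin n) ℂ) : ℝ :=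
  ((matFun f A - matFun f B - matFun (deriv f) B * (A - B)).trace).re

/-- Jensen `f`-divergence `J_f(A,B) = tr (½(f(A)+f(B)) - f(½(A+B)))`. -/
noncomputable def jensen {n : ℕ} (f : ℝ → ℝ) (A B : Matrix (Fin n) (Fin n) ℂ) : ℝ :=
  (((1/2 : ℂ) • (matFun f A + matFun f B) - matFun f ((1/2 : ℂ) • (A + B))).trace).re

/-- `P` is a rank-one (orthogonal) projection. -/
def IsRankOneProj {n : ℕ} (P : Matrix (Fin n) (Fin n) ℂ) : Prop :=
  P.IsHermitian ∧ P * P = P ∧ P.rank = 1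

/-!
Both matrix functions are computed through the continuous functional calculus. The spectrum of
`S = λP + μQ` lies in `{0, λ, μ}`, and the Lagrange polynomials `x(x - μ)/(λ(λ - μ))` and
`x(x - λ)/(μ(μ - λ))` of these nodes send `S` to `P` and `Q`; hence
`g(S) = g(0) + (g(λ) - g(0)) P + (g(μ) - g(0)) Q` for every `g`. Likewise `f(R) = 0`, because `f`
vanishes on `{0, 1} ⊇ spectrum R`. Taking traces with `tr P = tr Q = tr R = 1` and
`tr(RP) + tr(RQ) = tr((P + Q)R) = 1`, the terms in `f'(0)` cancel.
-/

lemma matFun_eq_cfc {n : ℕ} {A : Matrix (Fin n) (Fin n) ℂ} (hA : A.IsHermitian) (f : ℝ → ℝ) :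
    matFun f A = cfc f A := by
  rw [hA.cfc_eq, IsHermitian.cfc, matFun, dif_pos hA, Unitary.conjStarAlgAut_apply]
  rfl

lemma Matrix.IsHermitian.trace_eq_rank_of_isIdempotentElem {m : Type*} [Fintype m]
    [DecidableEq m] {A : Matrix m m ℂ} (hA : A.IsHermitian) (h : IsIdempotentElem A) :
    A.trace = A.rank := by
  have h01 : ∀ i, hA.eigenvalues i = 0 ∨ hA.eigenvalues i = 1 := fun i =>
    (isIdempotentElem_iff_spectrum_subset ℝ A hA.isSelfAdjoint).mp h
      (hA.eigenvalues_mem_spectrum_real i)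
  rw [hA.trace_eq_sum_eigenvalues, hA.rank_eq_card_non_zero_eigs, Fintype.card_subtype,
    Finset.card_filter]
  push_cast
  refine Finset.sum_congr rfl fun i _ => ?_
  rcases h01 i with h | h <;> simp [h]

lemma IsStarProjection.mul_eq_zero_symm {R : Type*} [NonUnitalNonAssocRing R] [StarRing R]
    {p q : R} (hp : IsStarProjection p) (hq : IsStarProjection q) (hpq : p * q = 0) :
    q * p = 0 :=
  (hp.isSelfAdjoint.commute_of_mul_eq_zero hq.isSelfAdjoint hpq).eq ▸ hpq

section FunctionalCalculus

variable {A : Type*} [Ring A] [StarRing A] [Algebra ℝ A] [TopologicalSpace A]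
  [ContinuousFunctionalCalculus ℝ A IsSelfAdjoint]

theorem IsStarProjection.cfc_eq {e : A} (he : IsStarProjection e) (f : ℝ → ℝ) :
    cfc f e = algebraMap ℝ A (f 0) + (f 1 - f 0) • e := by
  have hspec :=
    (isIdempotentElem_iff_spectrum_subset ℝ e he.isSelfAdjoint).mp he.isIdempotentElem
  calc cfc f e = cfc (fun x => f 0 + (f 1 - f 0) * x) e := by
        refine cfc_congr fun x hx => ?_
        rcases hspec hx with rfl | rfl <;> simp
    _ = algebraMap ℝ A (f 0) + (f 1 - f 0) • e := by
        rw [cfc_const_add (f 0) (fun x => (f 1 - f 0) * x) e, cfc_const_mul_id _ e]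

variable [StarModule ℝ A] {p q : A}

lemma cfc_mul_sub_smul_add_smul (hp : IsStarProjection p) (hq : IsStarProjection q)
    (hpq : p * q = 0) (a b : ℝ) :
    cfc (fun x => x * (x - b)) (a • p + b • q) = (a * (a - b)) • p := by
  have hs : IsSelfAdjoint (a • p + b • q) :=
    ((IsSelfAdjoint.all a).smul hp.isSelfAdjoint).add ((IsSelfAdjoint.all b).smul hq.isSelfAdjoint)
  rw [cfc_mul (fun x => x) (fun x => x - b) _, cfc_sub (fun x => x) (fun _ => b) _,
    cfc_id' ℝ (a • p + b • q), cfc_const b _, Algebra.algebraMap_eq_smul_one]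
  simp only [add_mul, mul_add, mul_sub, smul_mul_assoc, mul_smul_comm, hp.isIdempotentElem.eq,
    hq.isIdempotentElem.eq, hpq, hp.mul_eq_zero_symm hq hpq, mul_one, smul_zero]
  module

theorem cfc_smul_add_smul_of_mul_eq_zero (f : ℝ → ℝ) (hp : IsStarProjection p)
    (hq : IsStarProjection q) (hpq : p * q = 0) {a b : ℝ} (ha : a ≠ 0) (hb : b ≠ 0)
    (hab : a ≠ b) :
    cfc f (a • p + b • q) = algebraMap ℝ A (f 0) + (f a - f 0) • p + (f b - f 0) • q := by
  set s := a • p + b • q with hs_def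
  have hs : IsSelfAdjoint s :=
    ((IsSelfAdjoint.all a).smul hp.isSelfAdjoint).add ((IsSelfAdjoint.all b).smul hq.isSelfAdjoint)
  have hP : cfc (fun x => x * (x - b)) s = (a * (a - b)) • p :=
    cfc_mul_sub_smul_add_smul hp hq hpq a b
  have hQ : cfc (fun x => x * (x - a)) s = (b * (b - a)) • q := by
    rw [hs_def, add_comm]
    exact cfc_mul_sub_smul_add_smul hq hp (hp.mul_eq_zero_symm hq hpq) b a
  have hspec : ∀ x ∈ spectrum ℝ s, x = 0 ∨ x = a ∨ x = b := by
    have h : cfc (fun x => x * (x - b) * (x * (x - a))) s = cfc (fun _ => (0 : ℝ)) s := by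
      rw [cfc_mul (fun x => x * (x - b)) (fun x => x * (x - a)) s, hP, hQ, smul_mul_smul_comm,
        hpq, smul_zero, cfc_const_zero ℝ s]
    have hEq := eqOn_of_cfc_eq_cfc h
    intro x hx
    have hx0 : x * (x - b) * (x * (x - a)) = 0 := hEq hx
    simp only [mul_eq_zero, sub_eq_zero] at hx0
    tauto
  set c₁ := (f a - f 0) / (a * (a - b))
  set c₂ := (f b - f 0) / (b * (b - a))
  have hc₁ : c₁ * (a * (a - b)) = f a - f 0 :=
    div_mul_cancel₀ _ (mul_ne_zero ha (sub_ne_zero.mpr hab))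
  have hc₂ : c₂ * (b * (b - a)) = f b - f 0 :=
    div_mul_cancel₀ _ (mul_ne_zero hb (sub_ne_zero.mpr hab.symm))
  calc cfc f s
      = cfc (fun x => f 0 + (c₁ * (x * (x - b)) + c₂ * (x * (x - a)))) s := by
        refine cfc_congr fun x hx => ?_
        rcases hspec x hx with rfl | rfl | rfl
        · simp
        · linear_combination -hc₁
        · linear_combination -hc₂
    _ = algebraMap ℝ A (f 0) + (f a - f 0) • p + (f b - f 0) • q := by
        rw [cfc_const_add (f 0) (fun x => c₁ * (x * (x - b)) + c₂ * (x * (x - a))) s,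
          cfc_add s (fun x => c₁ * (x * (x - b))) (fun x => c₂ * (x * (x - a))),
          cfc_const_mul c₁ (fun x => x * (x - b)) s, cfc_const_mul c₂ (fun x => x * (x - a)) s,
          hP, hQ, smul_smul, smul_smul, hc₁, hc₂, add_assoc]

end FunctionalCalculus

namespace IsRankOneProj

variable {n : ℕ} {P : Matrix (Fin n) (Fin n) ℂ}

lemma isStarProjection (hP : IsRankOneProj P) : IsStarProjection P :=
  ⟨hP.2.1, hP.1⟩

lemma trace_eq_one (hP : IsRankOneProj P) : P.trace = 1 := by
  rw [hP.1.trace_eq_rank_of_isIdempotentElem hP.2.1, hP.2.2, Nat.cast_one]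

end IsRankOneProj

theorem bregman_rankOne_vs_rankTwo_general {n : ℕ} (f : ℝ → ℝ)
    (hf0 : f 0 = 0) (hf1 : f 1 = 0)
    (P Q : Matrix (Fin n) (Fin n) ℂ) (hP : IsRankOneProj P) (hQ : IsRankOneProj Q)
    (hPQ : P * Q = 0)
    (lam mu : ℝ) (hlam : 0 < lam) (hlm : lam < mu)
    (R : Matrix (Fin n) (Fin n) ℂ) (hR : IsRankOneProj R) (hsupp : (P + Q) * R = R) :
    bregman f R ((lam : ℂ) • P + (mu : ℂ) • Q) =
      -(deriv f lam) * ((R * P).trace).re - (deriv f mu) * ((R * Q).trace).re +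
        (lam * deriv f lam - f lam + mu * deriv f mu - f mu) := by
  have hS : (lam : ℂ) • P + (mu : ℂ) • Q = lam • P + mu • Q := by
    simp only [Complex.coe_smul]
  have hSh : (lam • P + mu • Q).IsHermitian :=
    ((IsSelfAdjoint.all lam).smul hP.1).add ((IsSelfAdjoint.all mu).smul hQ.1)
  have hcfc := fun g => cfc_smul_add_smul_of_mul_eq_zero g hP.isStarProjection
    hQ.isStarProjection hPQ hlam.ne' (hlam.trans hlm).ne' hlm.ne
  have htr : ((R * P).trace + (R * Q).trace).re = 1 := by
    rw [trace_mul_comm R P, trace_mul_comm R Q, ← trace_add, ← add_mul, hsupp, hR.trace_eq_one,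
      Complex.one_re]
  rw [bregman, hS, matFun_eq_cfc hR.1, matFun_eq_cfc hSh, matFun_eq_cfc hSh,
    hR.isStarProjection.cfc_eq, hcfc, hcfc]
  simp only [hf0, hf1, sub_zero, zero_smul, add_zero, Algebra.algebraMap_eq_smul_one, mul_sub,
    mul_add, add_mul, smul_mul_assoc, one_mul, mul_smul_comm, hP.2.1, hQ.2.1, hPQ,
    hP.isStarProjection.mul_eq_zero_symm hQ.isStarProjection hPQ, smul_zero, zero_add, trace_add,
    trace_sub, trace_smul, trace_zero, hP.trace_eq_one, hQ.trace_eq_one, hR.trace_eq_one,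
    trace_mul_comm P R, trace_mul_comm Q R, Complex.real_smul, mul_one, Complex.sub_re,
    Complex.add_re, Complex.re_ofReal_mul, Complex.zero_re, Complex.ofReal_re] at htr ⊢
  linear_combination (deriv f 0) * htr

/-- value of the Bregman divergence of a rank-one projection `R`
supported in the support of `S = λP + μQ`. -/
theorem bregman_rankOne_vs_rankTwo {n : ℕ} (f : ℝ → ℝ)
    (hconv : StrictConvexOn ℝ (Set.Ioi 0) f)
    (hdiff : ∀ x ∈ Set.Ioi (0 : ℝ), DifferentiableAt ℝ f x)
    (hf0 : f 0 = 0) (hf1 : f 1 = 0)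
    (P Q : Matrix (Fin n) (Fin n) ℂ) (hP : IsRankOneProj P) (hQ : IsRankOneProj Q)
    (hPQ : P * Q = 0)
    (lam mu : ℝ) (hlam : 0 < lam) (hlm : lam < mu) (hmu : mu < 1) (hsum : lam + mu = 1)
    (R : Matrix (Fin n) (Fin n) ℂ) (hR : IsRankOneProj R) (hsupp : (P + Q) * R = R) :
    bregman f R ((lam : ℂ) • P + (mu : ℂ) • Q) =
      -(deriv f lam) * ((R * P).trace).re - (deriv f mu) * ((R * Q).trace).re +
        (lam * deriv f lam - f lam + mu * deriv f mu - f mu) :=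
  bregman_rankOne_vs_rankTwo_general f hf0 hf1 P Q hP hQ hPQ lam mu hlam hlm R hR hsupp
end

section
/- Let f be a differentiable convex function on (0,∞) extending continuously to 0 with f(0) = f(1) = 0 and f'(0) := lim_{x→0+} f'(x) ∈ ℝ. Then for any two rank-one projections P, Q on a finite-dimensional complex Hilbert space, the Bregman f-divergence satisfies H_f(P,Q) = (1 − tr(PQ))·(f'(1) − f'(0)). -/
open Matrix
open scoped ComplexOrder

namespace Matrix.IsHermitian

variable {𝕜 : Type*} [RCLike 𝕜] {n : Type*} [Fintype n] [DecidableEq n] {A : Matrix n n 𝕜}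

theorem eigenvalues_eq_zero_or_one (hA : A.IsHermitian) (hA₂ : IsIdempotentElem A) (i : n) :
    hA.eigenvalues i = 0 ∨ hA.eigenvalues i = 1 := by
  simpa using hA₂.spectrum_subset ℝ (hA.eigenvalues_mem_spectrum_real i)

theorem trace_eq_rank (hA : A.IsHermitian) (hA₂ : IsIdempotentElem A) :
    A.trace = A.rank := by
  rw [hA.trace_eq_sum_eigenvalues, hA.rank_eq_card_non_zero_eigs, Fintype.card_subtype,
    Finset.natCast_card_filter]
  refine Finset.sum_congr rfl fun i _ => ?_
  rcases hA.eigenvalues_eq_zero_or_one hA₂ i with h | h <;> simp [h]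

end Matrix.IsHermitian

theorem matFun_eq_of_isIdempotentElem {n : ℕ} (g : ℝ → ℝ) {P : Matrix (Fin n) (Fin n) ℂ}
    (hP : P.IsHermitian) (hP₂ : IsIdempotentElem P) :
    matFun g P = (g 0 : ℂ) • (1 - P) + (g 1 : ℂ) • P := by
  set D := diagonal (RCLike.ofReal ∘ hP.eigenvalues : Fin n → ℂ)
  have hdiag : diagonal (fun i => (g (hP.eigenvalues i) : ℂ)) =
      (g 0 : ℂ) • (1 - D) + (g 1 : ℂ) • D := by
    ext i j
    rcases eq_or_ne i j with rfl | hij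
    · rcases hP.eigenvalues_eq_zero_or_one hP₂ i with h | h <;> simp [D, h]
    · simp [D, hij]
  rw [matFun, dif_pos hP]
  change Unitary.conjStarAlgAut ℂ _ hP.eigenvectorUnitary
    (diagonal fun i => (g (hP.eigenvalues i) : ℂ)) = _
  rw [hdiag, map_add, map_smul, map_smul, map_sub, map_one, ← hP.spectral_theorem]

theorem bregman_of_isIdempotentElem {n : ℕ} (f : ℝ → ℝ) {P Q : Matrix (Fin n) (Fin n) ℂ}
    (hP : P.IsHermitian) (hP₂ : IsIdempotentElem P) (hQ : Q.IsHermitian)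
    (hQ₂ : IsIdempotentElem Q) (htr : P.trace = Q.trace) :
    bregman f P Q = (Q.trace - (P * Q).trace).re * (deriv f 1 - deriv f 0) := by
  have hmul : (((deriv f 0 : ℝ) : ℂ) • (1 - Q) + ((deriv f 1 : ℝ) : ℂ) • Q) * (P - Q) =
      ((deriv f 0 : ℝ) : ℂ) • (P - Q * P) + ((deriv f 1 : ℝ) : ℂ) • (Q * P - Q) := by
    simp only [add_mul, smul_mul, sub_mul, one_mul, mul_sub, hQ₂.eq, sub_self, smul_sub]
    abel
  rw [bregman, matFun_eq_of_isIdempotentElem f hP hP₂, matFun_eq_of_isIdempotentElem f hQ hQ₂,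
    matFun_eq_of_isIdempotentElem _ hQ hQ₂, hmul]
  simp only [trace_add, trace_sub, trace_smul, trace_one, smul_eq_mul, trace_mul_comm Q P, htr]
  rw [← Complex.re_mul_ofReal]
  congr 1
  push_cast
  ring

theorem bregman_rankOne_projections_general {n : ℕ} (f : ℝ → ℝ)
    (P Q : Matrix (Fin n) (Fin n) ℂ) (hP : IsRankOneProj P) (hQ : IsRankOneProj Q) :
    bregman f P Q = (1 - ((P * Q).trace).re) * (deriv f 1 - deriv f 0) := by
  obtain ⟨hPh, hP₂, hPr⟩ := hP
  obtain ⟨hQh, hQ₂, hQr⟩ := hQ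
  have htrP : P.trace = 1 := by rw [hPh.trace_eq_rank hP₂, hPr, Nat.cast_one]
  have htrQ : Q.trace = 1 := by rw [hQh.trace_eq_rank hQ₂, hQr, Nat.cast_one]
  rw [bregman_of_isIdempotentElem f hPh hP₂ hQh hQ₂ (htrP.trans htrQ.symm), htrQ,
    Complex.sub_re, Complex.one_re]

/-- Bregman divergence between two rank-one projections when `f'`
extends continuously to `0`. -/
theorem bregman_rankOne_projections {n : ℕ} (f : ℝ → ℝ)
    (hconv : ConvexOn ℝ (Set.Ioi 0) f)
    (hdiff : ∀ x ∈ Set.Ici (0 : ℝ), DifferentiableAt ℝ f x)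
    (hcont : ContinuousOn (deriv f) (Set.Ici 0))
    (hf0 : f 0 = 0) (hf1 : f 1 = 0)
    (P Q : Matrix (Fin n) (Fin n) ℂ) (hP : IsRankOneProj P) (hQ : IsRankOneProj Q) :
    bregman f P Q = (1 - ((P * Q).trace).re) * (deriv f 1 - deriv f 0) :=
  bregman_rankOne_projections_general f P Q hP hQ
end

section
/- Let f be strictly convex and continuous on [0,∞) with f(0) = f(1) = 0. Then over all pairs of rank-one projections P, Q on a finite-dimensional Hilbert space of dimension ≥ 2, the Jensen f-divergence satisfies J_f(P,Q) ≤ −2 f(½), with equality if and only if PQ = 0. -/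
/-!
Put `M = ½(P + Q)`. Since `f 0 = f 1 = 0` and the spectra of `P` and `Q` lie in `{0, 1}`,
`J_f(P, Q) = -∑ f(μᵢ)` over the eigenvalues `μᵢ ≥ 0` of `M`. They sum to `tr M = 1`, at most two
of them are nonzero because `rank M ≤ 2`, and `∑ μᵢ² = tr M² = (1 + tr PQ) / 2`. For the two
possibly nonzero eigenvalues `a + b = 1`, strict midpoint convexity gives
`f a + f b ≥ 2 f(½)` with equality iff `a = b`, i.e. iff `a² + b² = ½`, i.e. iff `tr PQ = 0`.
Finally `tr PQ = ‖QP‖²` (Frobenius norm) vanishes iff `PQ = 0`.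
-/

open Matrix
open scoped ComplexOrder

namespace Matrix

variable {m 𝕜 : Type*} [Fintype m] [RCLike 𝕜]

lemma IsHermitian.trace_cfc [DecidableEq m] {A : Matrix m m 𝕜} (hA : A.IsHermitian)
    (f : ℝ → ℝ) : (cfc f A).trace = ∑ i, (f (hA.eigenvalues i) : 𝕜) := by
  rw [hA.cfc_eq, IsHermitian.cfc, Unitary.conjStarAlgAut_apply, trace_mul_cycle,
    Unitary.coe_star_mul_self, one_mul, trace_diagonal]
  rfl

lemma IsHermitian.trace_mul_self [DecidableEq m] {A : Matrix m m 𝕜} (hA : A.IsHermitian) :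
    (A * A).trace = ∑ i, ((hA.eigenvalues i ^ 2 : ℝ) : 𝕜) := by
  rw [← sq, ← cfc_pow_id (R := ℝ) A 2 hA.isSelfAdjoint, hA.trace_cfc]

lemma trace_eq_rank_of_isIdempotentElem [DecidableEq m] {K : Type*} [Field K] [CharZero K]
    {P : Matrix m m K} (hP : IsIdempotentElem P) : P.trace = P.rank := by
  have hP' : IsIdempotentElem (toLin' P) := by
    rw [IsIdempotentElem, Module.End.mul_eq_comp, ← toLin'_mul, hP.eq]
  rw [← trace_toLin'_eq, (LinearMap.IsIdempotentElem.isProj_range _ hP').trace, rank,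
    toLin'_apply']

lemma rank_add_le {l n K : Type*} [Fintype n] [Field K] (A B : Matrix l n K) :
    (A + B).rank ≤ A.rank + B.rank := by
  rw [rank, mulVecLin_add]
  exact (Submodule.finrank_mono (LinearMap.range_add_le _ _)).trans
    (Submodule.finrank_add_le_finrank_add_finrank _ _)

section StarProjection

variable {P Q : Matrix m m 𝕜}

lemma IsStarProjection.posSemidef (hP : IsStarProjection P) : P.PosSemidef := by
  have h := posSemidef_conjTranspose_mul_self P
  rwa [hP.isSelfAdjoint.isHermitian.eq, hP.isIdempotentElem.eq] at h

lemma posSemidef_half_add (hP : IsStarProjection P) (hQ : IsStarProjection Q) :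
    ((1 / 2 : 𝕜) • (P + Q)).PosSemidef :=
  (hP.posSemidef.add hQ.posSemidef).smul (by simp)

lemma trace_mul_eq_trace_conjTranspose_mul_self (hP : IsStarProjection P)
    (hQ : IsStarProjection Q) : (P * Q).trace = ((Q * P)ᴴ * (Q * P)).trace := by
  rw [conjTranspose_mul, hP.isSelfAdjoint.isHermitian.eq, hQ.isSelfAdjoint.isHermitian.eq,
    ← Matrix.mul_assoc, Matrix.mul_assoc P Q Q, hQ.isIdempotentElem.eq, trace_mul_comm (P * Q) P,
    ← Matrix.mul_assoc, hP.isIdempotentElem.eq]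

lemma re_trace_mul_eq_zero_iff (hP : IsStarProjection P) (hQ : IsStarProjection Q) :
    RCLike.re (P * Q).trace = 0 ↔ P * Q = 0 := by
  refine ⟨fun h => ?_, fun h => by simp [h]⟩
  have hnonneg : 0 ≤ (P * Q).trace := by
    rw [trace_mul_eq_trace_conjTranspose_mul_self hP hQ]
    exact (posSemidef_conjTranspose_mul_self _).trace_nonneg
  have htrace : (P * Q).trace = 0 :=
    RCLike.ext (by simpa using h) (by simpa using (RCLike.nonneg_iff.mp hnonneg).2)
  rw [trace_mul_eq_trace_conjTranspose_mul_self hP hQ,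
    trace_conjTranspose_mul_self_eq_zero_iff] at htrace
  exact (hQ.isSelfAdjoint.commute_of_mul_eq_zero hP.isSelfAdjoint htrace).eq ▸ htrace

end StarProjection

section HalfSum

variable [DecidableEq m] {P Q : Matrix m m 𝕜} (hM : ((1 / 2 : 𝕜) • (P + Q)).IsHermitian)

lemma sum_eigenvalues_half_add (hP : IsIdempotentElem P) (hQ : IsIdempotentElem Q)
    (hPr : P.rank = 1) (hQr : Q.rank = 1) : ∑ i, hM.eigenvalues i = 1 := by
  have h : ((∑ i, hM.eigenvalues i : ℝ) : 𝕜) = 1 := by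
    rw [RCLike.ofReal_sum, ← hM.trace_eq_sum_eigenvalues, trace_smul, trace_add,
      trace_eq_rank_of_isIdempotentElem hP, trace_eq_rank_of_isIdempotentElem hQ, hPr, hQr]
    norm_num
  exact_mod_cast h

lemma sum_sq_eigenvalues_half_add (hP : IsIdempotentElem P) (hQ : IsIdempotentElem Q)
    (hPr : P.rank = 1) (hQr : Q.rank = 1) :
    ∑ i, hM.eigenvalues i ^ 2 = (1 + RCLike.re (P * Q).trace) / 2 := by
  have h := congrArg RCLike.re hM.trace_mul_self
  have hsq : ((1 / 2 : 𝕜) • (P + Q)) * ((1 / 2 : 𝕜) • (P + Q))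
      = ((1 / 4 : ℝ) : 𝕜) • (P * P + Q * Q + P * Q + Q * P) := by
    rw [smul_mul_smul_comm, add_mul, mul_add, mul_add]
    congr 1
    · push_cast; norm_num
    · abel
  rw [hsq, hP.eq, hQ.eq, trace_smul, trace_add, trace_add, trace_add, trace_mul_comm Q P,
    trace_eq_rank_of_isIdempotentElem hP, trace_eq_rank_of_isIdempotentElem hQ, hPr, hQr] at h
  rw [smul_eq_mul, RCLike.re_ofReal_mul, map_sum] at h
  simp only [map_add, RCLike.ofReal_re, Nat.cast_one, RCLike.one_re] at h
  linarith

lemma card_eigenvalues_half_add_ne_zero_le_two (hPr : P.rank = 1) (hQr : Q.rank = 1) :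
    Nat.card {i // hM.eigenvalues i ≠ 0} ≤ 2 := by
  rw [Nat.card_eq_fintype_card, ← hM.rank_eq_card_non_zero_eigs,
    rank_smul_of_mem_nonZeroDivisors _ (mem_nonZeroDivisors_of_ne_zero (by norm_num))]
  exact (rank_add_le P Q).trans (by rw [hPr, hQr])

end HalfSum

end Matrix

lemma cfc_eq_zero_of_isIdempotentElem {A : Type*} {p : A → Prop} [TopologicalSpace A] [Ring A]
    [StarRing A] [Algebra ℝ A] [ContinuousFunctionalCalculus ℝ A p] {a : A}
    (ha : IsIdempotentElem a) {f : ℝ → ℝ} (hf0 : f 0 = 0) (hf1 : f 1 = 0) : cfc f a = 0 := by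
  rw [← cfc_zero ℝ a]
  refine cfc_congr fun x hx => ?_
  rcases ha.spectrum_subset ℝ hx with rfl | rfl <;> simp [hf0, hf1]

lemma jensen_eq_neg_sum_eigenvalues_half_add {n : ℕ} {f : ℝ → ℝ} (hf0 : f 0 = 0) (hf1 : f 1 = 0)
    {P Q : Matrix (Fin n) (Fin n) ℂ} (hP : IsStarProjection P) (hQ : IsStarProjection Q)
    (hM : ((1 / 2 : ℂ) • (P + Q)).IsHermitian) :
    jensen f P Q = -∑ i, f (hM.eigenvalues i) := by
  rw [jensen, matFun_eq_cfc hP.isSelfAdjoint.isHermitian,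
    matFun_eq_cfc hQ.isSelfAdjoint.isHermitian, matFun_eq_cfc hM,
    cfc_eq_zero_of_isIdempotentElem hP.isIdempotentElem hf0 hf1,
    cfc_eq_zero_of_isIdempotentElem hQ.isIdempotentElem hf0 hf1, add_zero, smul_zero, zero_sub,
    trace_neg, hM.trace_cfc]
  simp

section Convex

variable {s : Set ℝ} {f : ℝ → ℝ} {x y : ℝ}

lemma ConvexOn.two_mul_map_add_div_two_le (hf : ConvexOn ℝ s f) (hx : x ∈ s) (hy : y ∈ s) :
    2 * f ((x + y) / 2) ≤ f x + f y := by
  have h := hf.2 hx hy (by norm_num : (0 : ℝ) ≤ 1 / 2) (by norm_num : (0 : ℝ) ≤ 1 / 2)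
    (by norm_num)
  rw [smul_eq_mul, smul_eq_mul, smul_eq_mul, smul_eq_mul, ← mul_add, mul_comm,
    ← div_eq_mul_one_div] at h
  linarith

lemma StrictConvexOn.two_mul_map_add_div_two_lt (hf : StrictConvexOn ℝ s f) (hx : x ∈ s)
    (hy : y ∈ s) (hxy : x ≠ y) : 2 * f ((x + y) / 2) < f x + f y := by
  have h := hf.2 hx hy hxy (by norm_num : (0 : ℝ) < 1 / 2) (by norm_num : (0 : ℝ) < 1 / 2)
    (by norm_num)
  rw [smul_eq_mul, smul_eq_mul, smul_eq_mul, smul_eq_mul, ← mul_add, mul_comm,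
    ← div_eq_mul_one_div] at h
  linarith

lemma StrictConvexOn.add_eq_two_mul_map_add_div_two_iff (hf : StrictConvexOn ℝ s f) (hx : x ∈ s)
    (hy : y ∈ s) : f x + f y = 2 * f ((x + y) / 2) ↔ x = y := by
  refine ⟨fun h => ?_, fun h => by subst h; ring_nf⟩
  by_contra hxy
  exact (hf.two_mul_map_add_div_two_lt hx hy hxy).ne' h

end Convex

lemma Fintype.exists_sum_comp_eq_add_of_card_ne_zero_le_two {ι α β : Type*} [Fintype ι] [Zero α]
    [AddCommMonoid β] (μ : ι → α) (h : Nat.card {i // μ i ≠ 0} ≤ 2) :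
    ∃ a ∈ insert 0 (Set.range μ), ∃ b ∈ insert 0 (Set.range μ),
      ∀ g : α → β, g 0 = 0 → ∑ i, g (μ i) = g a + g b := by
  classical
  set S := Finset.univ.filter fun i => μ i ≠ 0
  have hS : S.card ≤ 2 := by
    rwa [Nat.card_eq_fintype_card, Fintype.card_subtype] at h
  have hsum (g : α → β) (hg : g 0 = 0) : ∑ i, g (μ i) = ∑ i ∈ S, g (μ i) :=
    (Finset.sum_filter_of_ne (p := fun i => μ i ≠ 0) fun i _ hgi h0 => hgi (by rw [h0, hg])).symm
  interval_cases hc : S.card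
  · refine ⟨0, .inl rfl, 0, .inl rfl, fun g hg => ?_⟩
    rw [hsum g hg, Finset.card_eq_zero.mp hc, Finset.sum_empty, hg, add_zero]
  · obtain ⟨i, hi⟩ := Finset.card_eq_one.mp hc
    refine ⟨μ i, .inr ⟨i, rfl⟩, 0, .inl rfl, fun g hg => ?_⟩
    rw [hsum g hg, hi, Finset.sum_singleton, hg, add_zero]
  · obtain ⟨i, j, hij, hi⟩ := Finset.card_eq_two.mp hc
    refine ⟨μ i, .inr ⟨i, rfl⟩, μ j, .inr ⟨j, rfl⟩, fun g hg => ?_⟩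
    rw [hsum g hg, hi, Finset.sum_pair hij]

lemma StrictConvexOn.two_mul_map_half_le_sum {ι : Type*} [Fintype ι] {f : ℝ → ℝ}
    (hf : StrictConvexOn ℝ (Set.Ici 0) f) (hf0 : f 0 = 0) {μ : ι → ℝ} (hμ : ∀ i, 0 ≤ μ i)
    (hsum : ∑ i, μ i = 1) (hcard : Nat.card {i // μ i ≠ 0} ≤ 2) :
    2 * f (1 / 2) ≤ ∑ i, f (μ i) ∧ (∑ i, f (μ i) = 2 * f (1 / 2) ↔ ∑ i, μ i ^ 2 = 1 / 2) := by
  obtain ⟨a, ha, b, hb, hg⟩ :=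
    Fintype.exists_sum_comp_eq_add_of_card_ne_zero_le_two (β := ℝ) μ hcard
  have hnonneg {c : ℝ} (hc : c ∈ insert 0 (Set.range μ)) : c ∈ Set.Ici 0 := by
    rcases hc with rfl | ⟨i, rfl⟩
    exacts [Set.self_mem_Ici, hμ i]
  have hab : a + b = 1 := hsum ▸ (hg id rfl).symm
  have hmid : (a + b) / 2 = 1 / 2 := by rw [hab]
  rw [hg f hf0, hg (· ^ 2) (zero_pow two_ne_zero), ← hmid,
    hf.add_eq_two_mul_map_add_div_two_iff (hnonneg ha) (hnonneg hb)]
  refine ⟨hf.convexOn.two_mul_map_add_div_two_le (hnonneg ha) (hnonneg hb), ?_⟩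
  constructor
  · rintro rfl; nlinarith
  · intro h; nlinarith [sq_nonneg (a - b)]

theorem jensen_rankOne_max_general {n : ℕ} (f : ℝ → ℝ)
    (hconv : StrictConvexOn ℝ (Set.Ici 0) f)
    (hf0 : f 0 = 0) (hf1 : f 1 = 0)
    (P Q : Matrix (Fin n) (Fin n) ℂ) (hP : IsRankOneProj P) (hQ : IsRankOneProj Q) :
    jensen f P Q ≤ -2 * f (1/2) ∧ (jensen f P Q = -2 * f (1/2) ↔ P * Q = 0) := by
  obtain ⟨hPh, hPP, hPr⟩ := hP
  obtain ⟨hQh, hQQ, hQr⟩ := hQ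
  have hPs : IsStarProjection P := ⟨hPP, hPh⟩
  have hQs : IsStarProjection Q := ⟨hQQ, hQh⟩
  have hM := posSemidef_half_add hPs hQs
  have hMh := hM.isHermitian
  obtain ⟨hle, heq⟩ := hconv.two_mul_map_half_le_sum hf0 hM.eigenvalues_nonneg
    (sum_eigenvalues_half_add hMh hPP hQQ hPr hQr)
    (card_eigenvalues_half_add_ne_zero_le_two hMh hPr hQr)
  rw [sum_sq_eigenvalues_half_add hMh hPP hQQ hPr hQr] at heq
  rw [jensen_eq_neg_sum_eigenvalues_half_add hf0 hf1 hPs hQs hMh, neg_mul, neg_le_neg_iff,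
    neg_inj, heq, ← re_trace_mul_eq_zero_iff hPs hQs]
  exact ⟨hle, by constructor <;> intro h <;> linarith⟩

/-- `J_f(P,Q) ≤ -2 f(1/2)` for rank-one projections, with equality
iff `PQ = 0`. -/
theorem jensen_rankOne_max {n : ℕ} (hn : 2 ≤ n) (f : ℝ → ℝ)
    (hconv : StrictConvexOn ℝ (Set.Ici 0) f)
    (hcont : ContinuousOn f (Set.Ici 0))
    (hf0 : f 0 = 0) (hf1 : f 1 = 0)
    (P Q : Matrix (Fin n) (Fin n) ℂ) (hP : IsRankOneProj P) (hQ : IsRankOneProj Q) :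
    jensen f P Q ≤ -2 * f (1/2) ∧ (jensen f P Q = -2 * f (1/2) ↔ P * Q = 0) :=
  jensen_rankOne_max_general f hconv hf0 hf1 P Q hP hQ
end

section
/- If f : (0,∞) → ℝ is strictly convex, then the map X ↦ tr f(X) is strictly convex on the set of positive definite operators on a finite-dimensional complex Hilbert space; i.e., for A ≠ B positive definite and 0 < λ < 1, tr f(λA + (1−λ)B) < λ tr f(A) + (1−λ) tr f(B). -/
open Matrix
open scoped ComplexOrder

/-!
Let `U` diagonalise `C = tA + (1-t)B` and let `a`, `b` be the real diagonals of `U*AU` and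
`U*BU`, so that the eigenvalues of `C` are `t a + (1-t) b`. If `V` diagonalises a Hermitian `M`,
the diagonal of `U*MU` is the image of the spectrum of `M` under the doubly stochastic matrix
`|(U*V)ᵢⱼ|²`, so Jensen's inequality gives Peierls's inequality `∑ f(aᵢ) ≤ tr f(A)`, with equality
only if `U*AU` is diagonal. Hence
`tr f(C) = ∑ f(t aᵢ + (1-t) bᵢ) ≤ t ∑ f(aᵢ) + (1-t) ∑ f(bᵢ) ≤ t tr f(A) + (1-t) tr f(B)`,
where equality in the first step forces `a = b` by strict convexity, and equality in the second
then gives `U*AU = diag a = diag b = U*BU`, i.e. `A = B`.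
-/

open Finset

section Jensen

variable {ι : Type*} [Fintype ι] {s : Set ℝ} {f : ℝ → ℝ}

theorem StrictConvexOn.sum_map_lt (hf : StrictConvexOn ℝ s f)
    {a b : ι → ℝ} (ha : ∀ i, a i ∈ s) (hb : ∀ i, b i ∈ s) (hab : a ≠ b) {t : ℝ}
    (ht0 : 0 < t) (ht1 : t < 1) :
    ∑ i, f (t * a i + (1 - t) * b i) < t * ∑ i, f (a i) + (1 - t) * ∑ i, f (b i) := by
  rw [mul_sum, mul_sum, ← sum_add_distrib]
  obtain ⟨i, hi⟩ := Function.ne_iff.1 hab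
  exact sum_lt_sum (fun j _ => hf.convexOn.2 (ha j) (hb j) ht0.le (by linarith) (by ring))
    ⟨i, mem_univ i, hf.2 (ha i) (hb i) hi ht0 (by linarith) (by ring)⟩

variable [DecidableEq ι] {q : Matrix ι ι ℝ} {x : ι → ℝ}

theorem mulVec_apply_mem_of_mem_doublyStochastic (hs : Convex ℝ s)
    (hq : q ∈ doublyStochastic ℝ ι) (hx : ∀ j, x j ∈ s) (i : ι) : (q *ᵥ x) i ∈ s :=
  hs.sum_mem (fun _ _ => nonneg_of_mem_doublyStochastic hq)
    (sum_row_of_mem_doublyStochastic hq i) fun j _ => hx j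

theorem ConvexOn.map_mulVec_apply_le (hf : ConvexOn ℝ s f) (hq : q ∈ doublyStochastic ℝ ι)
    (hx : ∀ j, x j ∈ s) (i : ι) : f ((q *ᵥ x) i) ≤ (q *ᵥ (f ∘ x)) i :=
  hf.map_sum_le (fun _ _ => nonneg_of_mem_doublyStochastic hq)
    (sum_row_of_mem_doublyStochastic hq i) fun j _ => hx j

theorem ConvexOn.sum_map_mulVec_le (hf : ConvexOn ℝ s f) (hq : q ∈ doublyStochastic ℝ ι)
    (hx : ∀ j, x j ∈ s) : ∑ i, f ((q *ᵥ x) i) ≤ ∑ j, f (x j) :=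
  calc ∑ i, f ((q *ᵥ x) i) ≤ ∑ i, (q *ᵥ (f ∘ x)) i :=
        sum_le_sum fun i _ => hf.map_mulVec_apply_le hq hx i
    _ = ∑ j, f (x j) := sum_mulVec_of_mem_doublyStochastic hq

theorem StrictConvexOn.eq_mulVec_apply_of_sum_map_mulVec_eq (hf : StrictConvexOn ℝ s f)
    (hq : q ∈ doublyStochastic ℝ ι) (hx : ∀ j, x j ∈ s)
    (heq : ∑ i, f ((q *ᵥ x) i) = ∑ j, f (x j)) {i j : ι} (hij : q i j ≠ 0) :
    x j = (q *ᵥ x) i := by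
  have hrow : f ((q *ᵥ x) i) = (q *ᵥ (f ∘ x)) i :=
    (sum_eq_sum_iff_of_le fun i _ => hf.convexOn.map_mulVec_apply_le hq hx i).1
      (heq.trans (sum_mulVec_of_mem_doublyStochastic hq).symm) i (mem_univ i)
  exact (hf.map_sum_eq_iff' (fun _ _ => nonneg_of_mem_doublyStochastic hq)
    (sum_row_of_mem_doublyStochastic hq i) fun j _ => hx j).1 hrow j (mem_univ j) hij

end Jensen

namespace Matrix

variable {ι : Type*} [Fintype ι]

theorem mul_star_self_apply_self (W : Matrix ι ι ℂ) (i : ι) :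
    (W * star W) i i = ∑ j, (Complex.normSq (W i j) : ℂ) := by
  simp only [mul_apply, star_apply, Complex.star_def, Complex.mul_conj]

theorem re_diag_star_mul_smul_add_smul_mul (U A B : Matrix ι ι ℂ) (t r : ℝ) (i : ι) :
    ((star U * ((t : ℂ) • A + (r : ℂ) • B) * U) i i).re =
      t * ((star U * A * U) i i).re + r * ((star U * B * U) i i).re := by
  simp only [Matrix.mul_add, Matrix.add_mul, Matrix.mul_smul, Matrix.smul_mul, Matrix.add_apply,
    Matrix.smul_apply, smul_eq_mul, Complex.add_re, Complex.re_ofReal_mul]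

variable [DecidableEq ι]

theorem map_normSq_mem_doublyStochastic {W : Matrix ι ι ℂ} (hW : W ∈ unitaryGroup ι ℂ) :
    W.map Complex.normSq ∈ doublyStochastic ℝ ι := by
  refine mem_doublyStochastic_iff_sum.2 ⟨fun i j => Complex.normSq_nonneg _, fun i => ?_,
    fun j => ?_⟩
  · have h := mul_star_self_apply_self W i
    rw [mem_unitaryGroup_iff.1 hW, one_apply_eq] at h
    exact_mod_cast h.symm
  · have h := mul_star_self_apply_self (star W) j
    rw [star_star, mem_unitaryGroup_iff'.1 hW, one_apply_eq] at h
    simpa [star_apply, Complex.normSq_conj] using congrArg Complex.re h.symm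

theorem mul_diagonal_mul_star_apply_self (W : Matrix ι ι ℂ) (d : ι → ℝ) (i : ι) :
    (W * diagonal (fun j => (d j : ℂ)) * star W) i i =
      ((W.map Complex.normSq *ᵥ d) i : ℂ) := by
  rw [mul_apply]
  simp only [mul_diagonal, star_apply, mulVec, dotProduct, map_apply,
    Complex.ofReal_sum, Complex.ofReal_mul, Complex.normSq_eq_conj_mul_self]
  exact sum_congr rfl fun j _ => by rw [Complex.star_def]; ring

theorem mul_diagonal_mul_star_eq_diagonal {R : Type*} [CommRing R] [StarRing R]
    {W : Matrix ι ι R} (hW : W ∈ unitaryGroup ι R) {d c : ι → R}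
    (h : ∀ i j, W i j ≠ 0 → d j = c i) : W * diagonal d * star W = diagonal c := by
  have hcomm : W * diagonal d = diagonal c * W := by
    ext i j
    rw [mul_diagonal, diagonal_mul]
    by_cases hij : W i j = 0
    · simp [hij]
    · rw [h i j hij, mul_comm]
  rw [hcomm, Matrix.mul_assoc, mem_unitaryGroup_iff.1 hW, Matrix.mul_one]

namespace IsHermitian

variable {A B M U : Matrix ι ι ℂ} {s : Set ℝ} {f : ℝ → ℝ}

theorem eigenvalues_eq_re_star_eigenvectorUnitary_mul_mul (hM : M.IsHermitian) (i : ι) :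
    hM.eigenvalues i =
      ((star (hM.eigenvectorUnitary : Matrix ι ι ℂ) * M * hM.eigenvectorUnitary) i i).re := by
  rw [← Unitary.conjStarAlgAut_star_apply (S := ℂ), hM.conjStarAlgAut_star_eigenvectorUnitary,
    diagonal_apply_eq, Function.comp_apply]
  exact (Complex.ofReal_re _).symm

theorem star_mul_mul_eq (hM : M.IsHermitian) (U : Matrix ι ι ℂ) :
    star U * M * U = (star U * hM.eigenvectorUnitary) *
      diagonal (fun j => (hM.eigenvalues j : ℂ)) * star (star U * hM.eigenvectorUnitary) := by
  conv_lhs => rw [hM.spectral_theorem, Unitary.conjStarAlgAut_apply]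
  simp only [star_mul, star_star, Matrix.mul_assoc]
  rfl

theorem re_diag_star_mul_mul (hM : M.IsHermitian) (U : Matrix ι ι ℂ) (i : ι) :
    ((star U * M * U) i i).re =
      ((star U * hM.eigenvectorUnitary).map Complex.normSq *ᵥ hM.eigenvalues) i := by
  rw [hM.star_mul_mul_eq, mul_diagonal_mul_star_apply_self, Complex.ofReal_re]

theorem star_mul_eigenvectorUnitary_mem_unitaryGroup (hM : M.IsHermitian)
    (hU : U ∈ unitaryGroup ι ℂ) :
    star U * hM.eigenvectorUnitary ∈ unitaryGroup ι ℂ :=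
  mul_mem (Unitary.star_mem hU) hM.eigenvectorUnitary.2

theorem re_diag_star_mul_mul_mem (hM : M.IsHermitian) (hU : U ∈ unitaryGroup ι ℂ)
    (hs : Convex ℝ s) (hMs : ∀ j, hM.eigenvalues j ∈ s) (i : ι) :
    ((star U * M * U) i i).re ∈ s := by
  rw [hM.re_diag_star_mul_mul]
  exact mulVec_apply_mem_of_mem_doublyStochastic hs
    (map_normSq_mem_doublyStochastic (hM.star_mul_eigenvectorUnitary_mem_unitaryGroup hU)) hMs i

/-- Peierls's inequality. -/
theorem sum_map_re_diag_star_mul_mul_le (hM : M.IsHermitian) (hU : U ∈ unitaryGroup ι ℂ)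
    (hf : ConvexOn ℝ s f) (hMs : ∀ j, hM.eigenvalues j ∈ s) :
    ∑ i, f ((star U * M * U) i i).re ≤ ∑ j, f (hM.eigenvalues j) := by
  simp only [hM.re_diag_star_mul_mul]
  exact hf.sum_map_mulVec_le
    (map_normSq_mem_doublyStochastic (hM.star_mul_eigenvectorUnitary_mem_unitaryGroup hU)) hMs

theorem star_mul_mul_eq_diagonal_of_sum_map_eq (hM : M.IsHermitian) (hU : U ∈ unitaryGroup ι ℂ)
    (hf : StrictConvexOn ℝ s f) (hMs : ∀ j, hM.eigenvalues j ∈ s)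
    (heq : ∑ i, f ((star U * M * U) i i).re = ∑ j, f (hM.eigenvalues j)) :
    star U * M * U = diagonal fun i => (((star U * M * U) i i).re : ℂ) := by
  have hW := hM.star_mul_eigenvectorUnitary_mem_unitaryGroup hU
  simp only [hM.re_diag_star_mul_mul] at heq ⊢
  rw [hM.star_mul_mul_eq]
  refine mul_diagonal_mul_star_eq_diagonal hW fun i j hij => ?_
  have hq : Complex.normSq ((star U * hM.eigenvectorUnitary) i j) ≠ 0 := by
    rwa [Ne, Complex.normSq_eq_zero]
  rw [hf.eq_mulVec_apply_of_sum_map_mulVec_eq (map_normSq_mem_doublyStochastic hW) hMs heq hq]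

theorem sum_map_re_diag_lt_or_lt_of_ne (hA : A.IsHermitian) (hB : B.IsHermitian)
    (hU : U ∈ unitaryGroup ι ℂ) (hf : StrictConvexOn ℝ s f) (hAs : ∀ j, hA.eigenvalues j ∈ s)
    (hBs : ∀ j, hB.eigenvalues j ∈ s) (hAB : A ≠ B)
    (hdiag : ∀ i, ((star U * A * U) i i).re = ((star U * B * U) i i).re) :
    ∑ i, f ((star U * A * U) i i).re < ∑ j, f (hA.eigenvalues j) ∨
      ∑ i, f ((star U * B * U) i i).re < ∑ j, f (hB.eigenvalues j) := by
  by_contra! h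
  have hDA := hA.star_mul_mul_eq_diagonal_of_sum_map_eq hU hf hAs
    ((hA.sum_map_re_diag_star_mul_mul_le hU hf.convexOn hAs).antisymm h.1)
  have hDB := hB.star_mul_mul_eq_diagonal_of_sum_map_eq hU hf hBs
    ((hB.sum_map_re_diag_star_mul_mul_le hU hf.convexOn hBs).antisymm h.2)
  refine hAB (EquivLike.injective (Unitary.conjStarAlgAut ℂ _ (star ⟨U, hU⟩)) ?_)
  rw [Unitary.conjStarAlgAut_star_apply, Unitary.conjStarAlgAut_star_apply]
  change star U * A * U = star U * B * U
  rw [hDA, hDB]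
  simp only [hdiag]

theorem sum_map_convexComb_re_diag_lt (hA : A.IsHermitian) (hB : B.IsHermitian)
    (hU : U ∈ unitaryGroup ι ℂ) (hf : StrictConvexOn ℝ s f) (hAs : ∀ j, hA.eigenvalues j ∈ s)
    (hBs : ∀ j, hB.eigenvalues j ∈ s) (hAB : A ≠ B) {t : ℝ} (ht0 : 0 < t) (ht1 : t < 1) :
    ∑ i, f (t * ((star U * A * U) i i).re + (1 - t) * ((star U * B * U) i i).re) <
      t * ∑ j, f (hA.eigenvalues j) + (1 - t) * ∑ j, f (hB.eigenvalues j) := by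
  set a := fun i => ((star U * A * U) i i).re
  set b := fun i => ((star U * B * U) i i).re
  have hPA : ∑ i, f (a i) ≤ ∑ j, f (hA.eigenvalues j) :=
    hA.sum_map_re_diag_star_mul_mul_le hU hf.convexOn hAs
  have hPB : ∑ i, f (b i) ≤ ∑ j, f (hB.eigenvalues j) :=
    hB.sum_map_re_diag_star_mul_mul_le hU hf.convexOn hBs
  have h1t : 0 < 1 - t := sub_pos.2 ht1
  obtain hab | hab := eq_or_ne a b
  · calc ∑ i, f (t * a i + (1 - t) * b i) = t * ∑ i, f (a i) + (1 - t) * ∑ i, f (b i) := by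
          rw [hab]; simp only [← add_mul, add_sub_cancel, one_mul]
      _ < _ := by
        rcases hA.sum_map_re_diag_lt_or_lt_of_ne hB hU hf hAs hBs hAB (congrFun hab) with h | h
        · exact add_lt_add_of_lt_of_le (mul_lt_mul_of_pos_left h ht0)
            (mul_le_mul_of_nonneg_left hPB h1t.le)
        · exact add_lt_add_of_le_of_lt (mul_le_mul_of_nonneg_left hPA ht0.le)
            (mul_lt_mul_of_pos_left h h1t)
  · have ha := hA.re_diag_star_mul_mul_mem hU hf.1 hAs
    have hb := hB.re_diag_star_mul_mul_mem hU hf.1 hBs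
    calc _ < t * ∑ i, f (a i) + (1 - t) * ∑ i, f (b i) := hf.sum_map_lt ha hb hab ht0 ht1
      _ ≤ _ := add_le_add (mul_le_mul_of_nonneg_left hPA ht0.le)
          (mul_le_mul_of_nonneg_left hPB h1t.le)

end IsHermitian

end Matrix

theorem re_trace_matFun {n : ℕ} (f : ℝ → ℝ) {M : Matrix (Fin n) (Fin n) ℂ}
    (hM : M.IsHermitian) : (matFun f M).trace.re = ∑ i, f (hM.eigenvalues i) := by
  rw [matFun, dif_pos hM, trace_mul_cycle, Unitary.coe_star_mul_self, Matrix.one_mul,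
    trace_diagonal, ← Complex.ofReal_sum, Complex.ofReal_re]

/-- strict convexity of `X ↦ tr f(X)` on positive definite matrices. -/
theorem traceFun_strictConvex {n : ℕ} (f : ℝ → ℝ)
    (hconv : StrictConvexOn ℝ (Set.Ioi 0) f)
    (A B : Matrix (Fin n) (Fin n) ℂ) (hA : A.PosDef) (hB : B.PosDef) (hAB : A ≠ B)
    (t : ℝ) (ht0 : 0 < t) (ht1 : t < 1) :
    ((matFun f ((t : ℂ) • A + ((1 - t : ℝ) : ℂ) • B)).trace).re <
      t * ((matFun f A).trace).re + (1 - t) * ((matFun f B).trace).re := by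
  set C := (t : ℂ) • A + ((1 - t : ℝ) : ℂ) • B
  have hC : C.IsHermitian := by
    simp [C, IsHermitian, conjTranspose_add, conjTranspose_smul, hA.1.eq, hB.1.eq]
  rw [re_trace_matFun f hC, re_trace_matFun f hA.1, re_trace_matFun f hB.1]
  simp only [hC.eigenvalues_eq_re_star_eigenvectorUnitary_mul_mul, C,
    re_diag_star_mul_smul_add_smul_mul]
  exact hA.1.sum_map_convexComb_re_diag_lt hB.1 hC.eigenvectorUnitary.2 hconv
    hA.eigenvalues_pos hB.eigenvalues_pos hAB ht0 ht1
end

section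
/- Let f be strictly convex with f' extending continuously to [0,∞), and define M(X) = max_{D ∈ S(H)} H_f(X,D) on the set S(H) of density operators. Then M(X) attains its maximal value over S(H) exactly at the rank-one projections: M(P) = max_{X∈S(H)} M(X) if and only if P is a rank-one projection. -/
open Matrix
open scoped ComplexOrder

/-- A density operator: positive semidefinite with unit trace. -/
def IsDensity {n : ℕ} (A : Matrix (Fin n) (Fin n) ℂ) : Prop :=
  A.PosSemidef ∧ A.trace = 1

/-!
Write `H_f(X, D) = tr f(X) - T(X, D)`, where `T` is the trace of the tangent approximation
`f(D) + f'(D)(X - D)`. In an eigenbasis of `D` with spectrum `μ`, `T` is affine in the diagonal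
of `X`, a point of the standard simplex, so it is smallest when that diagonal is a vertex at which
`f'(μ)` is minimal. Placing the spectrum of `D` suitably in an eigenbasis of a pure state `Q` thus
gives `D'` with `H_f(X, D) - tr f(X) ≤ H_f(Q, D') - tr f(Q)`, hence
`M(X) - tr f(X) ≤ M(Q) - tr f(Q)`. Finally `tr f(X) = ∑ f(λᵢ)` with `λ` in the simplex, so
convexity of `f` on `[0, 1]` gives `tr f(X) ≤ f(1) + (n - 1) f(0) = tr f(Q)`, with equality only at
the vertices when `f` is strictly convex: pure states maximise `M`, and only they do.
-/

open Finset

section Simplex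
variable {ι : Type*} [Fintype ι]

lemma comp_perm_mem_stdSimplex {l : ι → ℝ} (hl : l ∈ stdSimplex ℝ ι) (σ : Equiv.Perm ι) :
    l ∘ σ ∈ stdSimplex ℝ ι :=
  ⟨fun i => hl.1 (σ i), (Equiv.sum_comp σ l).trans hl.2⟩

lemma sum_add_mul_of_mem_stdSimplex {l : ι → ℝ} (hl : l ∈ stdSimplex ℝ ι) (a b : ℝ) :
    ∑ i, (a + l i * b) = Fintype.card ι * a + b := by
  simp [sum_add_distrib, ← sum_mul, hl.2]

variable [DecidableEq ι]

lemma exists_eq_single_of_mem_stdSimplex {l : ι → ℝ} (hl : l ∈ stdSimplex ℝ ι)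
    (h01 : ∀ i, l i = 0 ∨ l i = 1) : ∃ i₀, l = Pi.single i₀ 1 := by
  obtain ⟨i₀, hi₀⟩ : ∃ i₀, l i₀ = 1 := by
    by_contra! h
    have := hl.2
    simp [fun i => (h01 i).resolve_right (h i)] at this
  refine ⟨i₀, funext fun j => ?_⟩
  rcases eq_or_ne j i₀ with rfl | hj
  · simp [hi₀]
  rw [Pi.single_eq_of_ne hj]
  refine (h01 j).resolve_right fun hj1 => ?_
  have := add_le_sum (fun i _ => hl.1 i) (mem_univ i₀) (mem_univ j) hj.symm
  linarith [hl.2]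

lemma sum_apply_single_eq (f : ℝ → ℝ) (i₀ : ι) :
    ∑ i, f ((Pi.single i₀ 1 : ι → ℝ) i) = Fintype.card ι * f 0 + (f 1 - f 0) := by
  rw [← sum_add_mul_of_mem_stdSimplex (single_mem_stdSimplex ℝ i₀)]
  refine sum_congr rfl fun i _ => ?_
  rcases eq_or_ne i i₀ with rfl | hi <;> simp [*]

end Simplex

section Convexity
variable {f : ℝ → ℝ} {ι : Type*} [Fintype ι] [DecidableEq ι]

lemma ConvexOn.le_chord_zero_one (hf : ConvexOn ℝ (Set.Icc 0 1) f) {t : ℝ}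
    (ht : t ∈ Set.Icc 0 1) : f t ≤ f 0 + t * (f 1 - f 0) := by
  have := hf.2 (by simp : (0 : ℝ) ∈ Set.Icc 0 1) (by simp : (1 : ℝ) ∈ Set.Icc 0 1)
    (sub_nonneg.2 ht.2) ht.1 (sub_add_cancel 1 t)
  simp only [smul_eq_mul, mul_zero, mul_one, zero_add] at this
  linarith

lemma StrictConvexOn.lt_chord_zero_one (hf : StrictConvexOn ℝ (Set.Icc 0 1) f) {t : ℝ}
    (ht : t ∈ Set.Ioo 0 1) : f t < f 0 + t * (f 1 - f 0) := by
  have := hf.2 (by simp : (0 : ℝ) ∈ Set.Icc 0 1) (by simp : (1 : ℝ) ∈ Set.Icc 0 1)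
    zero_ne_one (sub_pos.2 ht.2) ht.1 (sub_add_cancel 1 t)
  simp only [smul_eq_mul, mul_zero, mul_one, zero_add] at this
  linarith

lemma ConvexOn.sum_le_sum_single (hf : ConvexOn ℝ (Set.Icc 0 1) f) {l : ι → ℝ}
    (hl : l ∈ stdSimplex ℝ ι) (i₀ : ι) :
    ∑ i, f (l i) ≤ ∑ i, f ((Pi.single i₀ 1 : ι → ℝ) i) := by
  rw [sum_apply_single_eq, ← sum_add_mul_of_mem_stdSimplex hl]
  exact sum_le_sum fun i _ => hf.le_chord_zero_one (mem_Icc_of_mem_stdSimplex hl i)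

lemma StrictConvexOn.exists_eq_single_of_sum_single_le (hf : StrictConvexOn ℝ (Set.Icc 0 1) f)
    {l : ι → ℝ} (hl : l ∈ stdSimplex ℝ ι) (i₀ : ι)
    (h : ∑ i, f ((Pi.single i₀ 1 : ι → ℝ) i) ≤ ∑ i, f (l i)) : ∃ j₀, l = Pi.single j₀ 1 := by
  refine exists_eq_single_of_mem_stdSimplex hl fun j => ?_
  by_contra! hj
  have hlt : ∑ i, f (l i) < ∑ i, (f 0 + l i * (f 1 - f 0)) :=
    sum_lt_sum (fun i _ => hf.convexOn.le_chord_zero_one (mem_Icc_of_mem_stdSimplex hl i))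
      ⟨j, mem_univ j, hf.lt_chord_zero_one ⟨(hl.1 j).lt_of_ne' hj.1,
        (mem_Icc_of_mem_stdSimplex hl j).2.lt_of_ne hj.2⟩⟩
  rw [sum_add_mul_of_mem_stdSimplex hl, ← sum_apply_single_eq f i₀] at hlt
  linarith

lemma ConvexOn.exists_abs_le_on_Icc {a b : ℝ} (hf : ConvexOn ℝ (Set.Icc a b) f) :
    ∃ C, ∀ t ∈ Set.Icc a b, |f t| ≤ C := by
  set M := max (f a) (f b)
  refine ⟨max M (M - 2 * f ((a + b) / 2)), fun t ht => ?_⟩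
  have hab : a ≤ b := ht.1.trans ht.2
  have hup : ∀ s ∈ Set.Icc a b, f s ≤ M := fun s hs =>
    hf.le_on_segment (Set.left_mem_Icc.2 hab) (Set.right_mem_Icc.2 hab)
      (by rwa [segment_eq_Icc hab])
  have hs : a + b - t ∈ Set.Icc a b := ⟨by linarith [ht.2], by linarith [ht.1]⟩
  have hmid := hf.2 ht hs (by norm_num : (0 : ℝ) ≤ 1 / 2) (by norm_num : (0 : ℝ) ≤ 1 / 2)
    (by norm_num)
  rw [show (1 / 2 : ℝ) • t + (1 / 2 : ℝ) • (a + b - t) = (a + b) / 2 by simp; ring] at hmid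
  simp only [smul_eq_mul] at hmid
  rw [abs_le]
  constructor <;> linarith [hup t ht, hup _ hs, le_max_left M (M - 2 * f ((a + b) / 2)),
    le_max_right M (M - 2 * f ((a + b) / 2))]

end Convexity

section TangentSum
variable {ι : Type*} [Fintype ι]

/-- The trace of `f(B) + f'(B)(A - B)`, computed in an orthonormal eigenbasis of `B`, where `v` is
the spectrum of `B` and `a` the diagonal of `A` in that basis. -/
noncomputable def tangentSum (f : ℝ → ℝ) (v a : ι → ℝ) : ℝ :=
  ∑ j, (f (v j) + deriv f (v j) * (a j - v j))

lemma tangentSum_eq (f : ℝ → ℝ) (v a : ι → ℝ) :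
    tangentSum f v a = ∑ j, (f (v j) - deriv f (v j) * v j) + ∑ j, deriv f (v j) * a j := by
  rw [tangentSum, ← sum_add_distrib]
  exact sum_congr rfl fun j _ => by ring

/-- `tangentSum f μ` is affine in its second argument, so on the simplex it is smallest at a
vertex `k` minimising `f'(μ k)`; the swap `i₀ ↔ k` moves that vertex to `i₀`. -/
lemma exists_perm_tangentSum_single_le [DecidableEq ι] (f : ℝ → ℝ) (μ : ι → ℝ) {x : ι → ℝ}
    (hx : x ∈ stdSimplex ℝ ι) (i₀ : ι) :
    ∃ σ : Equiv.Perm ι, tangentSum f (μ ∘ σ) (Pi.single i₀ 1) ≤ tangentSum f μ x := by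
  obtain ⟨k, -, hk⟩ := exists_min_image univ (fun j => deriv f (μ j)) ⟨i₀, mem_univ i₀⟩
  refine ⟨Equiv.swap i₀ k, ?_⟩
  have hperm : ∑ j, (f (μ (Equiv.swap i₀ k j)) -
      deriv f (μ (Equiv.swap i₀ k j)) * μ (Equiv.swap i₀ k j)) =
        ∑ j, (f (μ j) - deriv f (μ j) * μ j) :=
    Equiv.sum_comp (Equiv.swap i₀ k) fun j => f (μ j) - deriv f (μ j) * μ j
  have hsingle : ∑ j, deriv f (μ (Equiv.swap i₀ k j)) * (Pi.single i₀ 1 : ι → ℝ) j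
      = deriv f (μ k) := by
    simp [Pi.single_apply]
  have hmin : deriv f (μ k) ≤ ∑ j, deriv f (μ j) * x j :=
    calc deriv f (μ k) = ∑ j, deriv f (μ k) * x j := by rw [← mul_sum, hx.2, mul_one]
      _ ≤ ∑ j, deriv f (μ j) * x j :=
        sum_le_sum fun j _ => mul_le_mul_of_nonneg_right (hk j (mem_univ j)) (hx.1 j)
  rw [tangentSum_eq, tangentSum_eq]
  simp only [Function.comp_apply]
  linarith

lemma exists_le_tangentSum {f : ℝ → ℝ} (hf : ConvexOn ℝ (Set.Icc 0 1) f)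
    (hf' : ContinuousOn (deriv f) (Set.Icc 0 1)) :
    ∃ m, ∀ μ ∈ stdSimplex ℝ ι, ∀ x ∈ stdSimplex ℝ ι, m ≤ tangentSum f μ x := by
  obtain ⟨C, hC⟩ := hf.exists_abs_le_on_Icc
  obtain ⟨C', hC'⟩ := isCompact_Icc.exists_bound_of_continuousOn hf'
  refine ⟨∑ _j : ι, -(C + C'), fun μ hμ x hx => sum_le_sum fun j _ => ?_⟩
  have hμj := mem_Icc_of_mem_stdSimplex hμ j
  have hxj := mem_Icc_of_mem_stdSimplex hx j
  have hderiv : |deriv f (μ j) * (x j - μ j)| ≤ C' :=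
    calc |deriv f (μ j) * (x j - μ j)| = ‖deriv f (μ j)‖ * |x j - μ j| := by
          rw [abs_mul, Real.norm_eq_abs]
      _ ≤ C' * 1 := mul_le_mul (hC' _ hμj) (abs_sub_le_iff.2 ⟨by linarith [hxj.2, hμj.1],
          by linarith [hxj.1, hμj.2]⟩) (abs_nonneg _) ((norm_nonneg _).trans (hC' _ hμj))
      _ = C' := mul_one C'
  linarith [neg_abs_le (f (μ j)), hC _ hμj, neg_abs_le (deriv f (μ j) * (x j - μ j))]

end TangentSum

section Spectral
variable {ι : Type*} [Fintype ι] [DecidableEq ι]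

lemma diagonal_comp_mul_eq_mul_diagonal_comp (g : ℝ → ℝ) {a b : ι → ℝ} {M : Matrix ι ι ℂ}
    (h : diagonal (fun i => (a i : ℂ)) * M = M * diagonal (fun i => (b i : ℂ))) :
    diagonal (fun i => (g (a i) : ℂ)) * M = M * diagonal (fun i => (g (b i) : ℂ)) := by
  ext i j
  have hij : (a i : ℂ) * M i j = M i j * b j := by
    simpa [diagonal_mul, mul_diagonal] using congrFun (congrFun h i) j
  rcases eq_or_ne (M i j) 0 with h0 | h0
  · simp [diagonal_mul, mul_diagonal, h0]
  · have hab : a i = b j := by exact_mod_cast mul_right_cancel₀ h0 (hij.trans (mul_comm _ _))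
    simp [diagonal_mul, mul_diagonal, hab, mul_comm]

lemma mul_diagonal_comp_mul_star_eq (g : ℝ → ℝ) {V W : Matrix ι ι ℂ}
    (hW : W ∈ unitaryGroup ι ℂ) (hV : V ∈ unitaryGroup ι ℂ) {e v : ι → ℝ}
    (h : W * diagonal (fun i => (e i : ℂ)) * star W = V * diagonal (fun i => (v i : ℂ)) * star V) :
    W * diagonal (fun i => (g (e i) : ℂ)) * star W =
      V * diagonal (fun i => (g (v i) : ℂ)) * star V := by
  have hWW : star W * W = 1 := mem_unitaryGroup_iff'.1 hW
  have hWW' : W * star W = 1 := mem_unitaryGroup_iff.1 hW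
  have hVV : star V * V = 1 := mem_unitaryGroup_iff'.1 hV
  have hVV' : V * star V = 1 := mem_unitaryGroup_iff.1 hV
  -- `W⋆V` intertwines the two diagonal forms, hence also their images under `g`
  have hM : diagonal (fun i => (e i : ℂ)) * (star W * V) =
      star W * V * diagonal (fun i => (v i : ℂ)) :=
    calc diagonal (fun i => (e i : ℂ)) * (star W * V)
        = star W * (W * diagonal (fun i => (e i : ℂ)) * star W) * V := by
          simp only [Matrix.mul_assoc, ← Matrix.mul_assoc (star W) W, hWW, Matrix.one_mul]
      _ = star W * V * diagonal (fun i => (v i : ℂ)) := by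
          rw [h]
          simp only [Matrix.mul_assoc, hVV, Matrix.mul_one]
  calc W * diagonal (fun i => (g (e i) : ℂ)) * star W
      = W * (diagonal (fun i => (g (e i) : ℂ)) * (star W * V)) * star V := by
        simp only [Matrix.mul_assoc, hVV', Matrix.mul_one]
    _ = V * diagonal (fun i => (g (v i) : ℂ)) * star V := by
        rw [diagonal_comp_mul_eq_mul_diagonal_comp g hM]
        simp only [← Matrix.mul_assoc, hWW', Matrix.one_mul]

lemma isHermitian_mul_diagonal_mul_star (V : Matrix ι ι ℂ) (v : ι → ℝ) :
    (V * diagonal (fun i => (v i : ℂ)) * star V).IsHermitian :=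
  isHermitian_mul_mul_conjTranspose V (isHermitian_diagonal_iff.2 fun i => by
    simp [IsSelfAdjoint, Complex.conj_ofReal])

lemma star_mul_mul_diagonal_mul_star_mul {V : Matrix ι ι ℂ} (hV : V ∈ unitaryGroup ι ℂ)
    (d : ι → ℂ) : star V * (V * diagonal d * star V) * V = diagonal d := by
  have hVV : star V * V = 1 := mem_unitaryGroup_iff'.1 hV
  simp only [Matrix.mul_assoc, hVV, Matrix.mul_one, ← Matrix.mul_assoc (star V) V, Matrix.one_mul]

lemma trace_mul_diagonal_mul_star_mul (V : Matrix ι ι ℂ) (d : ι → ℂ) (C : Matrix ι ι ℂ) :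
    (V * diagonal d * star V * C).trace = ∑ j, d j * (star V * C * V) j j := by
  rw [Matrix.mul_assoc (V * diagonal d), trace_mul_comm (V * diagonal d),
    ← Matrix.mul_assoc (star V * C), trace_mul_comm (star V * C * V)]
  simp [Matrix.trace, diagonal_mul]

lemma trace_mul_diagonal_mul_star {V : Matrix ι ι ℂ} (hV : V ∈ unitaryGroup ι ℂ) (d : ι → ℂ) :
    (V * diagonal d * star V).trace = ∑ j, d j := by
  simpa [mem_unitaryGroup_iff'.1 hV] using trace_mul_diagonal_mul_star_mul V d 1

lemma Matrix.IsHermitian.isIdempotentElem_iff {A : Matrix ι ι ℂ}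
    (hA : A.IsHermitian) :
    IsIdempotentElem A ↔ ∀ i, hA.eigenvalues i = 0 ∨ hA.eigenvalues i = 1 := by
  rw [isIdempotentElem_iff_spectrum_subset ℝ A hA.isSelfAdjoint,
    hA.spectrum_real_eq_range_eigenvalues]
  simp [Set.range_subset_iff]

end Spectral

section MatFun
variable {n : ℕ}

lemma Matrix.IsHermitian.eq_mul_diagonal_mul_star {A : Matrix (Fin n) (Fin n) ℂ}
    (hA : A.IsHermitian) :
    A = (hA.eigenvectorUnitary : Matrix (Fin n) (Fin n) ℂ) *
      diagonal (fun i => (hA.eigenvalues i : ℂ)) *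
      star (hA.eigenvectorUnitary : Matrix (Fin n) (Fin n) ℂ) := by
  conv_lhs => rw [hA.spectral_theorem, Unitary.conjStarAlgAut_apply]
  rfl

lemma matFun_of_isHermitian (g : ℝ → ℝ) {A : Matrix (Fin n) (Fin n) ℂ} (hA : A.IsHermitian) :
    matFun g A = (hA.eigenvectorUnitary : Matrix (Fin n) (Fin n) ℂ) *
      diagonal (fun i => (g (hA.eigenvalues i) : ℂ)) *
      star (hA.eigenvectorUnitary : Matrix (Fin n) (Fin n) ℂ) :=
  dif_pos hA

lemma matFun_mul_diagonal_mul_star (g : ℝ → ℝ) {V : Matrix (Fin n) (Fin n) ℂ}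
    (hV : V ∈ unitaryGroup (Fin n) ℂ) (v : Fin n → ℝ) :
    matFun g (V * diagonal (fun i => (v i : ℂ)) * star V) =
      V * diagonal (fun i => (g (v i) : ℂ)) * star V := by
  have hB := isHermitian_mul_diagonal_mul_star V v
  rw [matFun_of_isHermitian g hB]
  exact mul_diagonal_comp_mul_star_eq g hB.eigenvectorUnitary.2 hV
    hB.eq_mul_diagonal_mul_star.symm

end MatFun

section Density
variable {n : ℕ}

lemma trace_matFun_mul_diagonal_mul_star (g : ℝ → ℝ) {V : Matrix (Fin n) (Fin n) ℂ}
    (hV : V ∈ unitaryGroup (Fin n) ℂ) (v : Fin n → ℝ) :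
    (matFun g (V * diagonal (fun i => (v i : ℂ)) * star V)).trace.re = ∑ j, g (v j) := by
  rw [matFun_mul_diagonal_mul_star g hV, trace_mul_diagonal_mul_star hV]
  simp [Complex.re_sum]

lemma Matrix.IsHermitian.trace_matFun (g : ℝ → ℝ) {A : Matrix (Fin n) (Fin n) ℂ}
    (hA : A.IsHermitian) : (matFun g A).trace.re = ∑ i, g (hA.eigenvalues i) := by
  conv_lhs => rw [hA.eq_mul_diagonal_mul_star]
  exact trace_matFun_mul_diagonal_mul_star g hA.eigenvectorUnitary.2 _

lemma bregman_mul_diagonal_mul_star (f : ℝ → ℝ) (A : Matrix (Fin n) (Fin n) ℂ)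
    {V : Matrix (Fin n) (Fin n) ℂ} (hV : V ∈ unitaryGroup (Fin n) ℂ) (v : Fin n → ℝ) :
    bregman f A (V * diagonal (fun i => (v i : ℂ)) * star V) =
      (matFun f A).trace.re - tangentSum f v (fun j => (star V * A * V) j j |>.re) := by
  have hconj : star V * (A - V * diagonal (fun i => (v i : ℂ)) * star V) * V =
      star V * A * V - diagonal (fun i => (v i : ℂ)) := by
    rw [Matrix.mul_sub, Matrix.sub_mul, star_mul_mul_diagonal_mul_star_mul hV]
  rw [bregman, trace_sub, trace_sub, matFun_mul_diagonal_mul_star f hV,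
    matFun_mul_diagonal_mul_star (deriv f) hV, trace_mul_diagonal_mul_star hV,
    trace_mul_diagonal_mul_star_mul, hconj]
  simp [tangentSum, Complex.re_sum, sum_add_distrib, sub_eq_add_neg]
  ring

lemma bregman_eq_sub_tangentSum (f : ℝ → ℝ) {X D : Matrix (Fin n) (Fin n) ℂ}
    (hX : X.IsHermitian) (hD : D.IsHermitian) :
    bregman f X D = ∑ i, f (hX.eigenvalues i) - tangentSum f hD.eigenvalues
      (fun j => (star (hD.eigenvectorUnitary : Matrix (Fin n) (Fin n) ℂ) * X *
        (hD.eigenvectorUnitary : Matrix (Fin n) (Fin n) ℂ)) j j |>.re) := by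
  conv_lhs => rw [hD.eq_mul_diagonal_mul_star]
  rw [bregman_mul_diagonal_mul_star f X hD.eigenvectorUnitary.2, hX.trace_matFun]

lemma IsDensity.star_mul_mul {X V : Matrix (Fin n) (Fin n) ℂ} (hX : IsDensity X)
    (hV : V ∈ unitaryGroup (Fin n) ℂ) : IsDensity (star V * X * V) :=
  ⟨by simpa [star_eq_conjTranspose] using hX.1.conjTranspose_mul_mul_same V,
    by rw [trace_mul_cycle, mem_unitaryGroup_iff.1 hV, Matrix.one_mul, hX.2]⟩

lemma IsDensity.diag_re_mem_stdSimplex {X : Matrix (Fin n) (Fin n) ℂ} (hX : IsDensity X) :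
    (fun j => (X j j).re) ∈ stdSimplex ℝ (Fin n) :=
  ⟨fun j => (Complex.le_def.1 (hX.1.diag_nonneg (i := j))).1,
    by simpa [Matrix.trace, Complex.re_sum] using congrArg Complex.re hX.2⟩

lemma IsDensity.eigenvalues_mem_stdSimplex {X : Matrix (Fin n) (Fin n) ℂ} (hX : IsDensity X) :
    hX.1.1.eigenvalues ∈ stdSimplex ℝ (Fin n) :=
  ⟨hX.1.eigenvalues_nonneg, by
    have h := hX.1.1.trace_eq_sum_eigenvalues.symm.trans hX.2
    simpa using congrArg RCLike.re h⟩

lemma isDensity_mul_diagonal_mul_star {V : Matrix (Fin n) (Fin n) ℂ}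
    (hV : V ∈ unitaryGroup (Fin n) ℂ) {v : Fin n → ℝ} (hv : v ∈ stdSimplex ℝ (Fin n)) :
    IsDensity (V * diagonal (fun i => (v i : ℂ)) * star V) :=
  ⟨by simpa [star_eq_conjTranspose] using
      (PosSemidef.diagonal fun i => by simpa using hv.1 i).mul_mul_conjTranspose_same V,
    by rw [trace_mul_diagonal_mul_star hV]; exact_mod_cast hv.2⟩

lemma IsDensity.isRankOneProj_iff {P : Matrix (Fin n) (Fin n) ℂ} (hP : IsDensity P) :
    IsRankOneProj P ↔ ∃ i₀, hP.1.1.eigenvalues = Pi.single i₀ 1 := by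
  constructor
  · rintro ⟨-, hidem, -⟩
    exact exists_eq_single_of_mem_stdSimplex hP.eigenvalues_mem_stdSimplex
      (hP.1.1.isIdempotentElem_iff.1 hidem)
  · rintro ⟨i₀, hi₀⟩
    refine ⟨hP.1.1, hP.1.1.isIdempotentElem_iff.2 fun i => ?_, ?_⟩
    · rw [hi₀]
      rcases eq_or_ne i i₀ with rfl | hi <;> simp [*]
    · rw [hP.1.1.rank_eq_card_non_zero_eigs, hi₀]
      simp [Pi.single_apply]

/-- `D'` has the spectrum of `D`, diagonal in the given eigenbasis of the pure state, with an
eigenvalue minimising `f'` placed on its support. -/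
lemma exists_bregman_sub_le (f : ℝ → ℝ) {X D V : Matrix (Fin n) (Fin n) ℂ}
    (hX : IsDensity X) (hD : IsDensity D) (hV : V ∈ unitaryGroup (Fin n) ℂ) (i₀ : Fin n) :
    ∃ D', IsDensity D' ∧ bregman f X D - ∑ i, f (hX.1.1.eigenvalues i) ≤
      bregman f (V * diagonal (fun i => ((Pi.single i₀ 1 : Fin n → ℝ) i : ℂ)) * star V) D' -
        ∑ i, f ((Pi.single i₀ 1 : Fin n → ℝ) i) := by
  obtain ⟨σ, hσ⟩ := exists_perm_tangentSum_single_le f hD.1.1.eigenvalues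
    (hX.star_mul_mul hD.1.1.eigenvectorUnitary.2).diag_re_mem_stdSimplex i₀
  refine ⟨V * diagonal (fun i => ((hD.1.1.eigenvalues ∘ σ) i : ℂ)) * star V,
    isDensity_mul_diagonal_mul_star hV (comp_perm_mem_stdSimplex hD.eigenvalues_mem_stdSimplex σ),
    ?_⟩
  rw [bregman_eq_sub_tangentSum f hX.1.1 hD.1.1, bregman_mul_diagonal_mul_star f _ hV,
    trace_matFun_mul_diagonal_mul_star f hV, star_mul_mul_diagonal_mul_star_mul hV]
  simp only [diagonal_apply_eq, Complex.ofReal_re]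
  linarith

lemma exists_bregman_le {f : ℝ → ℝ} (hf : ConvexOn ℝ (Set.Icc 0 1) f)
    (hf' : ContinuousOn (deriv f) (Set.Icc 0 1)) :
    ∃ K, ∀ X D : Matrix (Fin n) (Fin n) ℂ, IsDensity X → IsDensity D → bregman f X D ≤ K := by
  obtain ⟨C, hC⟩ := hf.exists_abs_le_on_Icc
  obtain ⟨m, hm⟩ := exists_le_tangentSum (ι := Fin n) hf hf'
  refine ⟨n * C - m, fun X D hX hD => ?_⟩
  have htr : ∑ i, f (hX.1.1.eigenvalues i) ≤ n * C := by
    simpa using sum_le_card_nsmul univ _ C fun i _ => (le_abs_self _).trans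
      (hC _ (mem_Icc_of_mem_stdSimplex hX.eigenvalues_mem_stdSimplex i))
  rw [bregman_eq_sub_tangentSum f hX.1.1 hD.1.1]
  linarith [hm _ hD.eigenvalues_mem_stdSimplex _
    (hX.star_mul_mul hD.1.1.eigenvectorUnitary.2).diag_re_mem_stdSimplex]

end Density

noncomputable def maxBregman {n : ℕ} (f : ℝ → ℝ) (X : Matrix (Fin n) (Fin n) ℂ) : ℝ :=
  sSup ((fun D => bregman f X D) '' {D | IsDensity D})

section MaxBregman
variable {n : ℕ} {f : ℝ → ℝ}
variable (hf : ConvexOn ℝ (Set.Icc 0 1) f) (hf' : ContinuousOn (deriv f) (Set.Icc 0 1))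
include hf hf'

lemma bregman_le_maxBregman {X D : Matrix (Fin n) (Fin n) ℂ} (hX : IsDensity X)
    (hD : IsDensity D) : bregman f X D ≤ maxBregman f X := by
  obtain ⟨K, hK⟩ := exists_bregman_le (n := n) hf hf'
  exact le_csSup ⟨K, by rintro _ ⟨D', hD', rfl⟩; exact hK X D' hX hD'⟩ ⟨D, hD, rfl⟩

lemma maxBregman_sub_le {X V : Matrix (Fin n) (Fin n) ℂ} (hX : IsDensity X)
    (hV : V ∈ unitaryGroup (Fin n) ℂ) (i₀ : Fin n) :
    maxBregman f X - ∑ i, f (hX.1.1.eigenvalues i) ≤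
      maxBregman f (V * diagonal (fun i => ((Pi.single i₀ 1 : Fin n → ℝ) i : ℂ)) * star V) -
        ∑ i, f ((Pi.single i₀ 1 : Fin n → ℝ) i) := by
  rw [sub_le_iff_le_add]
  refine csSup_le ⟨_, X, hX, rfl⟩ ?_
  rintro _ ⟨D, hD, rfl⟩
  obtain ⟨D', hD', h⟩ := exists_bregman_sub_le f hX hD hV i₀
  linarith [bregman_le_maxBregman hf hf'
    (isDensity_mul_diagonal_mul_star hV (single_mem_stdSimplex ℝ i₀)) hD']

lemma isGreatest_maxBregman {V : Matrix (Fin n) (Fin n) ℂ} (hV : V ∈ unitaryGroup (Fin n) ℂ)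
    (i₀ : Fin n) :
    IsGreatest (maxBregman f '' {X : Matrix (Fin n) (Fin n) ℂ | IsDensity X})
      (maxBregman f (V * diagonal (fun i => ((Pi.single i₀ 1 : Fin n → ℝ) i : ℂ)) * star V)) := by
  refine ⟨⟨_, isDensity_mul_diagonal_mul_star hV (single_mem_stdSimplex ℝ i₀), rfl⟩, ?_⟩
  rintro _ ⟨X, hX, rfl⟩
  linarith [maxBregman_sub_le hf hf' hX hV i₀,
    hf.sum_le_sum_single hX.eigenvalues_mem_stdSimplex i₀]

end MaxBregman

theorem bregman_maxFun_maximal_iff_pure_general {n : ℕ} (f : ℝ → ℝ)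
    (hconv : StrictConvexOn ℝ (Set.Ici 0) f)
    (hcont : ContinuousOn (deriv f) (Set.Ici 0)) :
    ∀ P : Matrix (Fin n) (Fin n) ℂ, IsDensity P →
      (sSup ((fun D => bregman f P D) '' ({D | IsDensity D} : Set (Matrix (Fin n) (Fin n) ℂ))) =
          sSup ((fun X => sSup ((fun D => bregman f X D) '' ({D | IsDensity D} : Set (Matrix (Fin n) (Fin n) ℂ)))) ''
            ({X | IsDensity X} : Set (Matrix (Fin n) (Fin n) ℂ))) ↔
        IsRankOneProj P) := by
  intro P hP
  have hf : StrictConvexOn ℝ (Set.Icc 0 1) f :=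
    hconv.subset Set.Icc_subset_Ici_self (convex_Icc 0 1)
  have hf' : ContinuousOn (deriv f) (Set.Icc 0 1) := hcont.mono Set.Icc_subset_Ici_self
  change maxBregman f P = sSup (maxBregman f '' _) ↔ _
  rw [hP.isRankOneProj_iff]
  constructor
  · intro hmax
    obtain ⟨i₀⟩ : Nonempty (Fin n) := by
      rcases n with _ | n
      · simp [IsDensity, Matrix.trace] at hP
      · exact ⟨0⟩
    rw [(isGreatest_maxBregman hf.convexOn hf' (one_mem _) i₀).csSup_eq] at hmax
    have := maxBregman_sub_le hf.convexOn hf' hP (one_mem _) i₀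
    exact hf.exists_eq_single_of_sum_single_le hP.eigenvalues_mem_stdSimplex i₀ (by linarith)
  · rintro ⟨j₀, hj₀⟩
    have hPQ := hP.1.1.eq_mul_diagonal_mul_star
    rw [hj₀] at hPQ
    rw [hPQ, (isGreatest_maxBregman hf.convexOn hf' hP.1.1.eigenvectorUnitary.2 j₀).csSup_eq]

/-- `M(X) = max_D H_f(X,D)` attains its maximum over the state
space exactly at the rank-one projections. -/
theorem bregman_maxFun_maximal_iff_pure {n : ℕ} (hn : 2 ≤ n) (f : ℝ → ℝ)
    (hconv : StrictConvexOn ℝ (Set.Ici 0) f)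
    (hdiff : ∀ x ∈ Set.Ici (0 : ℝ), DifferentiableAt ℝ f x)
    (hcont : ContinuousOn (deriv f) (Set.Ici 0)) :
    ∀ P : Matrix (Fin n) (Fin n) ℂ, IsDensity P →
      (sSup ((fun D => bregman f P D) '' ({D | IsDensity D} : Set (Matrix (Fin n) (Fin n) ℂ))) =
          sSup ((fun X => sSup ((fun D => bregman f X D) '' ({D | IsDensity D} : Set (Matrix (Fin n) (Fin n) ℂ)))) ''
            ({X | IsDensity X} : Set (Matrix (Fin n) (Fin n) ℂ))) ↔
        IsRankOneProj P) :=
  bregman_maxFun_maximal_iff_pure_general f hconv hcont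
end

section
/- Let g : [0,∞) → ℝ be strictly monotone increasing, m ≥ 1, and let λ₁ > λ₂ > … > λ_m > 0 and μ₁ > μ₂ > … > μ_m > 0 satisfy Σλ_i = Σμ_i = 1 and g(λ_l) − g(λ_{l+1}) = g(μ_l) − g(μ_{l+1}) for all 1 ≤ l ≤ m−1. Then it is not possible that λ_k > μ_k for some k; i.e., λ_i = μ_i for all i. -/
/-! Equal increments make `g λᵢ - g μᵢ` independent of `i`, so it has one sign for all `i`;
by strict monotonicity so does `λᵢ - μᵢ`, and the equal total sums force that sign to be zero. -/

open Matrix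
open scoped ComplexOrder

open Finset

theorem StrictMonoOn.lt_of_sub_eq_sub {α β : Type*} [LinearOrder α] [AddCommGroup β]
    [PartialOrder β] [IsOrderedAddMonoid β] {g : α → β} {s : Set α} (hg : StrictMonoOn g s)
    {a b c d : α} (ha : a ∈ s) (hb : b ∈ s) (hc : c ∈ s) (hd : d ∈ s)
    (h : g a - g c = g b - g d) (hcd : c < d) : a < b := by
  rw [sub_eq_sub_iff_sub_eq_sub] at h
  rw [← hg.lt_iff_lt ha hb, ← sub_neg, h, sub_neg]
  exact hg hc hd hcd

section IncrementsEq

variable {ι α β : Type*} [Fintype ι] [AddCommMonoid α] [LinearOrder α]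
  [IsOrderedCancelAddMonoid α] [AddCommGroup β] [PartialOrder β] [IsOrderedAddMonoid β]
  {g : α → β} {s : Set α} {lam mu : ι → α}

theorem StrictMonoOn.sum_lt_sum_of_increments_eq (hg : StrictMonoOn g s)
    (hlam : ∀ i, lam i ∈ s) (hmu : ∀ i, mu i ∈ s)
    (hinc : ∀ i j, g (lam i) - g (lam j) = g (mu i) - g (mu j)) {i : ι} (hi : lam i < mu i) :
    ∑ j, lam j < ∑ j, mu j :=
  sum_lt_sum_of_nonempty ⟨i, mem_univ i⟩ fun j _ ↦
    hg.lt_of_sub_eq_sub (hlam j) (hmu j) (hlam i) (hmu i) (hinc j i) hi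

theorem StrictMonoOn.eq_of_increments_eq_of_sum_eq (hg : StrictMonoOn g s)
    (hlam : ∀ i, lam i ∈ s) (hmu : ∀ i, mu i ∈ s)
    (hinc : ∀ i j, g (lam i) - g (lam j) = g (mu i) - g (mu j))
    (hsum : ∑ i, lam i = ∑ i, mu i) : lam = mu := by
  funext i
  rcases lt_trichotomy (lam i) (mu i) with hlt | heq | hgt
  · exact absurd hsum (hg.sum_lt_sum_of_increments_eq hlam hmu hinc hlt).ne
  · exact heq
  · exact absurd hsum.symm
      (hg.sum_lt_sum_of_increments_eq hmu hlam (fun i j ↦ (hinc i j).symm) hgt).ne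

end IncrementsEq

theorem Fin.apply_eq_apply_of_forall_eq_succ {m : ℕ} {β : Type*} {f : Fin m → β}
    (hf : ∀ i : ℕ, ∀ h : i + 1 < m, f ⟨i, Nat.lt_of_succ_lt h⟩ = f ⟨i + 1, h⟩) (i j : Fin m) :
    f i = f j := by
  suffices h : ∀ k : Fin m, f k = f ⟨0, k.pos⟩ by rw [h i, h j]
  rintro ⟨k, hk⟩
  induction k with
  | zero => rfl
  | succ k ih => rw [← hf k hk, ih]

theorem eq_of_gap_increments_general (g : ℝ → ℝ) (hg : StrictMonoOn g (Set.Ici 0))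
    (m : ℕ) (lam mu : Fin m → ℝ)
    (hlam_pos : ∀ i, 0 < lam i) (hmu_pos : ∀ i, 0 < mu i)
    (hlam_sum : ∑ i, lam i = 1) (hmu_sum : ∑ i, mu i = 1)
    (hgap : ∀ i : ℕ, ∀ h : i + 1 < m,
      g (lam ⟨i, Nat.lt_of_succ_lt h⟩) - g (lam ⟨i + 1, h⟩) =
        g (mu ⟨i, Nat.lt_of_succ_lt h⟩) - g (mu ⟨i + 1, h⟩)) :
    lam = mu := by
  have hdiff_const := Fin.apply_eq_apply_of_forall_eq_succ (f := fun i ↦ g (lam i) - g (mu i))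
    fun i h ↦ by linarith [hgap i h]
  have hinc : ∀ i j, g (lam i) - g (lam j) = g (mu i) - g (mu j) := fun i j ↦ by
    linarith [hdiff_const i j]
  exact hg.eq_of_increments_eq_of_sum_eq (fun i ↦ (hlam_pos i).le) (fun i ↦ (hmu_pos i).le) hinc
    (hlam_sum.trans hmu_sum.symm)

/-- two strictly decreasing probability vectors with equal
`g`-increments coincide, for strictly increasing `g`. -/
theorem eq_of_gap_increments (g : ℝ → ℝ) (hg : StrictMonoOn g (Set.Ici 0))
    (m : ℕ) (hm : 1 ≤ m) (lam mu : Fin m → ℝ)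
    (hlam_anti : ∀ i j : Fin m, i < j → lam j < lam i)
    (hmu_anti : ∀ i j : Fin m, i < j → mu j < mu i)
    (hlam_pos : ∀ i, 0 < lam i) (hmu_pos : ∀ i, 0 < mu i)
    (hlam_sum : ∑ i, lam i = 1) (hmu_sum : ∑ i, mu i = 1)
    (hgap : ∀ i : ℕ, ∀ h : i + 1 < m,
      g (lam ⟨i, Nat.lt_of_succ_lt h⟩) - g (lam ⟨i + 1, h⟩) =
        g (mu ⟨i, Nat.lt_of_succ_lt h⟩) - g (mu ⟨i + 1, h⟩)) :
    lam = mu :=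
  eq_of_gap_increments_general g hg m lam mu hlam_pos hmu_pos hlam_sum hmu_sum hgap
end
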